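/- arXiv:math/0506261 — 5 statements merged into one kernel-verified Lean document; each statement's English description precedes it below -/
import Mathlib

section
/- For any point x in a compact metric space F with a finitely ramified cell structure, there exists a strictly decreasing infinite sequence of cells F = F_{α_1} ⊋ F_{α_2} ⊋ ... whose intersection is {x}, and the diameters of the cells in any such sequence tend to zero. -/
open Filter Topology

/-- A finitely ramified cell structure on a compact metric space `F`
(Teplyaev, "Harmonic coordinates on fractals with finitely ramified cell structure",
Definition of a finitely ramified fractal). -/
structure FRCS (F : Type) [MetricSpace F] [CompactSpace F] : Type 1 where
  /-- the countable index set -/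
  A : Type
  countable_A : Countable A
  /-- the cells -/
  cell : A → Set F
  /-- the vertex (boundary) sets of the cells -/
  V : A → Finset F
  cell_injective : Function.Injective cell
  cell_compact : ∀ α, IsCompact (cell α)
  cell_connected : ∀ α, IsConnected (cell α)
  V_subset_cell : ∀ α, (V α : Set F) ⊆ cell α
  two_le_card_V : ∀ α, 2 ≤ (V α).card
  /-- the filtration `𝒜_n` -/
  level : ℕ → Finset A
  /-- the index of the whole space `F₀ = F` -/
  top : A
  level_zero : level 0 = {top}
  cell_top : cell top = Set.univ
  level_disjoint : ∀ m n, m ≠ n → Disjoint (level m) (level n)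
  subdiv : ∀ n, ∀ α ∈ level n, ∃ s : Finset A, s.Nonempty ∧ s ⊆ level (n + 1) ∧
    cell α = (⋃ β ∈ s, cell β) ∧ (V α : Set F) ⊆ (⋃ β ∈ s, (V β : Set F))
  inter_cells : ∀ n, ∀ α ∈ level n, ∀ α' ∈ level n, α ≠ α' →
    cell α ∩ cell α' = (V α : Set F) ∩ (V α' : Set F)
  nested_singleton : ∀ c : ℕ → A, (∀ n, cell (c (n + 1)) ⊂ cell (c n)) →
    ∃ x : F, (⋂ n, cell (c n)) = {x}

namespace FRCS

variable {F : Type} [MetricSpace F] [CompactSpace F]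

/-- The set `V_* = ⋃_α V_α` of all vertex points. -/
def Vstar (S : FRCS F) : Set F := ⋃ α, (S.V α : Set F)

/-- `U_n(x)`: the union of all `n`-cells containing `x`. -/
def U (S : FRCS F) (n : ℕ) (x : F) : Set F :=
  ⋃ α ∈ {α ∈ (S.level n : Set S.A) | x ∈ S.cell α}, S.cell α

end FRCS
/-- A resistance form `(𝓔, Dom 𝓔)` on a set `V` in the sense of Kigami:
(RF1) `dom` is a linear subspace of `ℓ(V)` containing constants, `Energy` is a nonnegative
symmetric quadratic form vanishing exactly on constants; (RF2) the quotient modulo constants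
is a Hilbert space (completeness); (RF3) finite extension property; (RF4) the effective
resistance suprema are finite; (RF5) the Markov property. -/
structure ResistanceForm (V : Type) : Type where
  dom : Set (V → ℝ)
  Energy : (V → ℝ) → (V → ℝ) → ℝ
  dom_add_smul : ∀ u ∈ dom, ∀ v ∈ dom, ∀ a b : ℝ, (a • u + b • v) ∈ dom
  const_mem : ∀ c : ℝ, (fun _ => c) ∈ dom
  symm : ∀ u v, Energy u v = Energy v u
  add_smul_left : ∀ u v w : V → ℝ, ∀ a b : ℝ,
    Energy (a • u + b • v) w = a * Energy u w + b * Energy v w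
  nonneg : ∀ u ∈ dom, 0 ≤ Energy u u
  energy_zero_iff : ∀ u ∈ dom, (Energy u u = 0 ↔ ∃ c : ℝ, u = fun _ => c)
  complete : ∀ u : ℕ → (V → ℝ), (∀ n, u n ∈ dom) →
    (∀ ε : ℝ, 0 < ε → ∃ N, ∀ m ≥ N, ∀ n ≥ N, Energy (u m - u n) (u m - u n) < ε) →
    ∃ v ∈ dom, Filter.Tendsto (fun n => Energy (u n - v) (u n - v)) Filter.atTop (nhds 0)
  exists_extension : ∀ (s : Finset V) (g : V → ℝ), ∃ u ∈ dom, ∀ p ∈ s, u p = g p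
  bddAbove : ∀ p q : V,
    BddAbove {r : ℝ | ∃ u ∈ dom, 0 < Energy u u ∧ r = (u p - u q) ^ 2 / Energy u u}
  markov : ∀ u ∈ dom, (fun p => min 1 (max 0 (u p))) ∈ dom ∧
    Energy (fun p => min 1 (max 0 (u p))) (fun p => min 1 (max 0 (u p))) ≤ Energy u u

namespace ResistanceForm

variable {V : Type}

/-- The effective resistance
`R(p,q) = sup { (u(p) - u(q))² / 𝓔(u,u) : u ∈ Dom 𝓔, 𝓔(u,u) > 0 }`. -/
noncomputable def R (rf : ResistanceForm V) (p q : V) : ℝ :=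
  sSup {r : ℝ | ∃ u ∈ rf.dom, 0 < rf.Energy u u ∧ r = (u p - u q) ^ 2 / rf.Energy u u}

end ResistanceForm
/-- For any point `x` of a compact metric space with a finitely ramified cell structure
there is a strictly decreasing infinite sequence of cells, starting from `F` itself, whose
intersection is `{x}`; and the diameters of the cells in any such sequence tend to zero. -/
theorem stmt0 {F : Type} [MetricSpace F] [CompactSpace F] (S : FRCS F) (x : F) :
    (∃ c : ℕ → S.A, S.cell (c 0) = Set.univ ∧
      (∀ n, S.cell (c (n + 1)) ⊂ S.cell (c n)) ∧ (⋂ n, S.cell (c n)) = {x}) ∧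
    (∀ c : ℕ → S.A, (∀ n, S.cell (c (n + 1)) ⊂ S.cell (c n)) →
      (⋂ n, S.cell (c n)) = {x} →
      Filter.Tendsto (fun n => Metric.diam (S.cell (c n))) Filter.atTop (nhds 0)) := by
  constructor
  · -- existence of a strictly decreasing sequence through x
    have step : ∀ n (α : S.A), α ∈ S.level n → x ∈ S.cell α →
        ∃ β, β ∈ S.level (n + 1) ∧ x ∈ S.cell β ∧ S.cell β ⊂ S.cell α := by
      intro n α hα hx
      obtain ⟨s, hne, hs, hcell, -⟩ := S.subdiv n α hα
      rw [hcell] at hx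
      simp only [Set.mem_iUnion] at hx
      obtain ⟨β, hβs, hxβ⟩ := hx
      have hβ : β ∈ S.level (n + 1) := hs hβs
      have hsub : S.cell β ⊆ S.cell α := by
        rw [hcell]; exact Set.subset_biUnion_of_mem hβs
      refine ⟨β, hβ, hxβ, hsub, fun h => ?_⟩
      have heq : S.cell β = S.cell α := Set.Subset.antisymm hsub h
      have hβα : β = α := S.cell_injective heq
      have hdisj := S.level_disjoint n (n + 1) (by omega)
      exact (Finset.disjoint_left.mp hdisj hα) (hβα ▸ hβ)
    choose g hg1 hg2 hg3 using step
    let f : ∀ n, {α : S.A // α ∈ S.level n ∧ x ∈ S.cell α} :=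
      fun n => Nat.rec
        ⟨S.top, by rw [S.level_zero]; exact Finset.mem_singleton_self _,
          by rw [S.cell_top]; trivial⟩
        (fun n p => ⟨g n p.1 p.2.1 p.2.2, hg1 n p.1 p.2.1 p.2.2, hg2 n p.1 p.2.1 p.2.2⟩) n
    have hstrict : ∀ n, S.cell ((f (n + 1)).1) ⊂ S.cell ((f n).1) := fun n =>
      hg3 n (f n).1 (f n).2.1 (f n).2.2
    refine ⟨fun n => (f n).1, ?_, hstrict, ?_⟩
    · show S.cell S.top = Set.univ
      exact S.cell_top
    · obtain ⟨y, hy⟩ := S.nested_singleton (fun n => (f n).1) hstrict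
      have hx : x ∈ ⋂ n, S.cell ((f n).1) := Set.mem_iInter.2 fun n => (f n).2.2
      rw [hy] at hx
      rw [hy, hx]
  · intro c hdec hinter
    have hmono : ∀ m n : ℕ, m ≤ n → S.cell (c n) ⊆ S.cell (c m) := by
      intro m n hmn
      induction hmn with
      | refl => exact Set.Subset.rfl
      | step h ih => exact (hdec _).1.trans ih
    have hxmem : ∀ n, x ∈ S.cell (c n) := by
      intro n
      have : x ∈ ⋂ n, S.cell (c n) := by rw [hinter]; rfl
      exact Set.mem_iInter.mp this n
    rw [Metric.tendsto_atTop]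
    intro ε hε
    set K : ℕ → Set F := fun n => S.cell (c n) ∩ (Metric.ball x (ε / 3))ᶜ with hK
    have hKcompact : ∀ n, IsCompact (K n) := fun n =>
      (S.cell_compact (c n)).inter_right Metric.isOpen_ball.isClosed_compl
    have hKclosed : ∀ n, IsClosed (K n) := fun n => (hKcompact n).isClosed
    have hKanti : ∀ n, K (n + 1) ⊆ K n := fun n =>
      Set.inter_subset_inter_left _ (hdec n).1
    have hempty : ∃ N, K N = ∅ := by
      by_contra h
      push_neg at h
      have hne : ∀ n, (K n).Nonempty := h
      obtain ⟨y, hy⟩ := IsCompact.nonempty_iInter_of_sequence_nonempty_isCompact_isClosed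
        K hKanti hne (hKcompact 0) hKclosed
      have hy1 : y ∈ ⋂ n, S.cell (c n) :=
        Set.mem_iInter.2 fun n => (Set.mem_iInter.mp hy n).1
      rw [hinter] at hy1
      have hnb : y ∉ Metric.ball x (ε / 3) := (Set.mem_iInter.mp hy 0).2
      apply hnb
      rw [hy1]
      exact Metric.mem_ball_self (by linarith)
    obtain ⟨N, hN⟩ := hempty
    refine ⟨N, fun n hn => ?_⟩
    have hsub : S.cell (c n) ⊆ Metric.ball x (ε / 3) := by
      intro y hy
      by_contra hnb
      have : y ∈ K N := ⟨hmono N n hn hy, hnb⟩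
      rw [hN] at this
      exact this
    have hb : Metric.diam (S.cell (c n)) ≤ 2 * (ε / 3) := by
      calc Metric.diam (S.cell (c n)) ≤ Metric.diam (Metric.ball x (ε / 3)) :=
            Metric.diam_mono hsub Metric.isBounded_ball
        _ ≤ 2 * (ε / 3) := Metric.diam_ball (by linarith)
    have hd : 0 ≤ Metric.diam (S.cell (c n)) := Metric.diam_nonneg
    rw [Real.dist_eq, sub_zero, abs_of_nonneg hd]
    linarith
end

section
/- In a set F with finitely ramified cell structure, for each x ∈ F and n ≥ 0 let U_n(x) be the union of all n-cells containing x. Then the collection {interior(U_n(x)) : x ∈ F, n ≥ 0} is a countable fundamental system of neighborhoods: for any x and any open neighborhood U of x there exist y ∈ V_* and n such that x ∈ U_n(x) ⊂ U_n(y) ⊂ U. -/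
open Filter Topology

namespace FRCS

variable {F : Type} [MetricSpace F] [CompactSpace F] (S : FRCS F)

lemma cell_infinite (α : S.A) : (S.cell α).Infinite := by
  obtain ⟨p, hp, q, hq, hpq⟩ := Finset.one_lt_card.mp (S.two_le_card_V α)
  exact (S.cell_connected α).isPreconnected.infinite_of_nontrivial
    ⟨p, S.V_subset_cell α hp, q, S.V_subset_cell α hq, hpq⟩

lemma eq_of_infinite_inter {n : ℕ} {α α' : S.A} (hα : α ∈ S.level n) (hα' : α' ∈ S.level n)
    (h : (S.cell α ∩ S.cell α').Infinite) : α = α' := by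
  by_contra hne
  rw [S.inter_cells n α hα α' hα' hne] at h
  exact h (Set.Finite.inter_of_left (S.V α).finite_toSet _)

lemma covering (n : ℕ) : ⋃ α ∈ S.level n, S.cell α = Set.univ := by
  induction n with
  | zero => simp [S.level_zero, S.cell_top]
  | succ n ih =>
    apply Set.eq_univ_of_univ_subset
    rw [← ih]
    refine Set.iUnion₂_subset fun α hα => ?_
    obtain ⟨s, -, hs, hcell, -⟩ := S.subdiv n α hα
    rw [hcell]
    exact Set.iUnion₂_mono' fun β hβ => ⟨β, hs hβ, subset_rfl⟩

lemma exists_cell (n : ℕ) (z : F) : ∃ α ∈ S.level n, z ∈ S.cell α := by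
  have := S.covering n
  have hz : z ∈ ⋃ α ∈ S.level n, S.cell α := this ▸ Set.mem_univ z
  simpa using hz

lemma exists_parent {n : ℕ} {β : S.A} (hβ : β ∈ S.level (n + 1)) :
    ∃ α ∈ S.level n, S.cell β ⊆ S.cell α := by
  classical
  obtain ⟨s, hsne, hssub, hscell, hsV⟩ :
      ∃ s : (n' : ℕ) → (α : S.A) → α ∈ S.level n' → Finset S.A,
        (∀ n' α h, (s n' α h).Nonempty) ∧ (∀ n' α h, s n' α h ⊆ S.level (n' + 1)) ∧
        (∀ n' α h, S.cell α = ⋃ β' ∈ s n' α h, S.cell β') ∧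
        (∀ n' α h, (S.V α : Set F) ⊆ ⋃ β' ∈ s n' α h, (S.V β' : Set F)) := by
    choose s h1 h2 h3 h4 using S.subdiv
    exact ⟨s, h1, h2, h3, h4⟩
  by_contra h
  push_neg at h
  have hcov : S.cell β ⊆ ⋃ β' ∈ (S.level (n + 1)).erase β, (S.cell β ∩ S.cell β') := by
    intro z hz
    obtain ⟨α, hα, hzα⟩ := S.exists_cell n z
    rw [hscell n α hα] at hzα
    simp only [Set.mem_iUnion] at hzα
    obtain ⟨β', hβ', hzβ'⟩ := hzα
    have hne : β' ≠ β := by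
      rintro rfl
      exact h α hα (by
        rw [hscell n α hα]
        exact Set.subset_biUnion_of_mem (u := fun b => S.cell b) hβ')
    exact Set.mem_biUnion (Finset.mem_erase.mpr ⟨hne, hssub n α hα hβ'⟩) ⟨hz, hzβ'⟩
  have hfin : (S.cell β).Finite := by
    refine Set.Finite.subset (Set.Finite.biUnion (Finset.finite_toSet _) fun β' hβ' => ?_) hcov
    obtain ⟨hne, hβ'lev⟩ := Finset.mem_erase.mp hβ'
    exact Set.not_infinite.mp fun hinf => hne (S.eq_of_infinite_inter hβ hβ'lev hinf).symm
  exact S.cell_infinite β hfin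

lemma exists_ancestor : ∀ {m k : ℕ}, k ≤ m → ∀ {β : S.A}, β ∈ S.level m →
    ∃ α ∈ S.level k, S.cell β ⊆ S.cell α := by
  intro m
  induction m with
  | zero => intro k hk β hβ; exact ⟨β, Nat.le_zero.mp hk ▸ hβ, subset_rfl⟩
  | succ m ih =>
    intro k hk β hβ
    rcases Nat.lt_or_ge k (m + 1) with hlt | hge
    · obtain ⟨γ, hγ, hsub⟩ := S.exists_parent hβ
      obtain ⟨α, hα, hsub'⟩ := ih (Nat.lt_succ_iff.mp hlt) hγ
      exact ⟨α, hα, hsub.trans hsub'⟩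
    · exact ⟨β, le_antisymm hk hge ▸ hβ, subset_rfl⟩

lemma mem_U_iff {n : ℕ} {x z : F} : z ∈ S.U n x ↔ ∃ α ∈ S.level n, x ∈ S.cell α ∧ z ∈ S.cell α := by
  simp only [U, Set.mem_iUnion, Set.mem_setOf_eq, Finset.mem_coe]
  tauto

lemma mem_U_self (n : ℕ) (x : F) : x ∈ S.U n x := by
  obtain ⟨α, hα, hxα⟩ := S.exists_cell n x
  exact (S.mem_U_iff).mpr ⟨α, hα, hxα, hxα⟩

lemma U_succ_subset (n : ℕ) (x : F) : S.U (n + 1) x ⊆ S.U n x := by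
  intro z hz
  obtain ⟨β, hβ, hxβ, hzβ⟩ := (S.mem_U_iff).mp hz
  obtain ⟨α, hα, hsub⟩ := S.exists_parent hβ
  exact (S.mem_U_iff).mpr ⟨α, hα, hsub hxβ, hsub hzβ⟩

lemma U_antitone {n m : ℕ} (h : n ≤ m) (x : F) : S.U m x ⊆ S.U n x := by
  induction m with
  | zero => exact Nat.le_zero.mp h ▸ subset_rfl
  | succ m ih =>
    rcases Nat.lt_or_ge n (m + 1) with hlt | hge
    · exact (S.U_succ_subset m x).trans (ih (Nat.lt_succ_iff.mp hlt))
    · exact le_antisymm h hge ▸ subset_rfl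

lemma U_eq (n : ℕ) (x : F) [DecidablePred (fun α => x ∈ S.cell α)] :
    S.U n x = ⋃ α ∈ (S.level n).filter (fun α => x ∈ S.cell α), S.cell α := by
  ext z
  rw [S.mem_U_iff]
  simp only [Set.mem_iUnion, Finset.mem_filter, Finset.mem_coe]
  tauto

lemma U_compact (n : ℕ) (x : F) : IsCompact (S.U n x) := by
  classical
  rw [S.U_eq n x]
  exact Set.Finite.isCompact_biUnion (Finset.finite_toSet _) fun α _ => S.cell_compact α

lemma iInter_U (x : F) : ⋂ n, S.U n x = {x} := by
  apply Set.eq_singleton_iff_unique_mem.mpr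
  refine ⟨Set.mem_iInter.mpr fun n => S.mem_U_self n x, ?_⟩
  intro y hy
  by_contra hyx
  have hT : ∀ m, ∃ α ∈ S.level m, x ∈ S.cell α ∧ y ∈ S.cell α := by
    intro m
    obtain ⟨α, hα, hxα, hyα⟩ := (S.mem_U_iff).mp (Set.mem_iInter.mp hy m)
    exact ⟨α, hα, hxα, hyα⟩
  classical
  -- P n α: α is a level-n cell containing x and y with descendants containing x,y at all deeper levels
  set P : ℕ → S.A → Prop := fun n α => α ∈ S.level n ∧ x ∈ S.cell α ∧ y ∈ S.cell α ∧
    ∀ m, n ≤ m → ∃ β ∈ S.level m, x ∈ S.cell β ∧ y ∈ S.cell β ∧ S.cell β ⊆ S.cell α with hP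
  have hbase : P 0 S.top := by
    refine ⟨by rw [S.level_zero]; exact Finset.mem_singleton_self _,
      by rw [S.cell_top]; trivial, by rw [S.cell_top]; trivial, fun m _ => ?_⟩
    obtain ⟨α, hα, hxα, hyα⟩ := hT m
    exact ⟨α, hα, hxα, hyα, by rw [S.cell_top]; exact Set.subset_univ _⟩
  have hstep : ∀ n α, P n α → ∃ α', P (n + 1) α' ∧ S.cell α' ⊆ S.cell α := by
    intro n α ⟨hα, hxα, hyα, hgood⟩
    by_contra hno
    push_neg at hno
    set C : Finset S.A := (S.level (n + 1)).filter
      (fun γ => x ∈ S.cell γ ∧ y ∈ S.cell γ ∧ S.cell γ ⊆ S.cell α) with hC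
    -- for each γ ∈ C, pick a level where goodness fails
    have hbad : ∀ γ ∈ C, ∃ m, n + 1 ≤ m ∧
        ¬∃ β ∈ S.level m, x ∈ S.cell β ∧ y ∈ S.cell β ∧ S.cell β ⊆ S.cell γ := by
      intro γ hγ
      simp only [hC, Finset.mem_filter] at hγ
      obtain ⟨hγlev, hxγ, hyγ, hγsub⟩ := hγ
      by_contra hcon
      push_neg at hcon
      exact hno γ ⟨hγlev, hxγ, hyγ, fun m hm => hcon m hm⟩ hγsub
    choose! f hf1 hf2 using hbad
    set M : ℕ := (C.sup f) ⊔ (n + 1) with hM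
    obtain ⟨β, hβlev, hxβ, hyβ, hβsub⟩ := hgood M (le_trans (Nat.le_succ n) (le_sup_right))
    have hβinf : (S.cell β).Infinite := S.cell_infinite β
    -- ancestor of β at level n+1
    obtain ⟨γ₀, hγ₀lev, hγ₀sub⟩ := S.exists_ancestor (le_sup_right : n + 1 ≤ M) hβlev
    -- γ₀'s parent must be α
    have hγ₀α : S.cell γ₀ ⊆ S.cell α := by
      obtain ⟨α₁, hα₁, hα₁sub⟩ := S.exists_parent hγ₀lev
      have : α₁ = α := S.eq_of_infinite_inter hα₁ hα
        (hβinf.mono (Set.subset_inter (hγ₀sub.trans hα₁sub) hβsub))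
      exact this ▸ hα₁sub
    have hγ₀C : γ₀ ∈ C := by
      simp only [hC, Finset.mem_filter]
      exact ⟨hγ₀lev, hγ₀sub hxβ, hγ₀sub hyβ, hγ₀α⟩
    -- ancestor of β at level f γ₀
    have hfM : f γ₀ ≤ M := le_trans (Finset.le_sup hγ₀C) le_sup_left
    obtain ⟨δ, hδlev, hδsub⟩ := S.exists_ancestor hfM hβlev
    -- δ's ancestor at level n+1 is γ₀
    obtain ⟨γ₁, hγ₁lev, hγ₁sub⟩ := S.exists_ancestor (hf1 γ₀ hγ₀C) hδlev
    have hγeq : γ₁ = γ₀ := S.eq_of_infinite_inter hγ₁lev hγ₀lev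
      (hβinf.mono (Set.subset_inter (hδsub.trans hγ₁sub) hγ₀sub))
    exact hf2 γ₀ hγ₀C ⟨δ, hδlev, hδsub hxβ, hδsub hyβ, hγeq ▸ hγ₁sub⟩
  -- build the strictly nested sequence
  let c : ∀ n : ℕ, {α : S.A // P n α} := fun n => Nat.rec ⟨S.top, hbase⟩
    (fun n p => ⟨(hstep n p.1 p.2).choose, (hstep n p.1 p.2).choose_spec.1⟩) n
  have hsub : ∀ n, S.cell ((c (n + 1)).1) ⊆ S.cell ((c n).1) := fun n =>
    (hstep n (c n).1 (c n).2).choose_spec.2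
  have hssub : ∀ n, S.cell ((c (n + 1)).1) ⊂ S.cell ((c n).1) := by
    intro n
    refine lt_of_le_of_ne (hsub n) fun heq => ?_
    have : (c (n + 1)).1 = (c n).1 := S.cell_injective heq
    have h1 := (c (n + 1)).2.1
    have h2 := (c n).2.1
    rw [this] at h1
    exact (Finset.disjoint_left.mp (S.level_disjoint (n + 1) n (Nat.succ_ne_self n)) h1) h2
  obtain ⟨z, hz⟩ := S.nested_singleton (fun n => (c n).1) hssub
  have hxz : x ∈ ({z} : Set F) := hz ▸ Set.mem_iInter.mpr fun n => (c n).2.2.1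
  have hyz : y ∈ ({z} : Set F) := hz ▸ Set.mem_iInter.mpr fun n => (c n).2.2.2.1
  exact hyx (hyz.trans hxz.symm)

lemma exists_U_subset {x : F} {Uo : Set F} (hU : IsOpen Uo) (hx : x ∈ Uo) :
    ∃ n, S.U n x ⊆ Uo := by
  by_contra h
  push_neg at h
  have hne : ∀ n, (S.U n x ∩ Uoᶜ).Nonempty := by
    intro n
    obtain ⟨z, hz1, hz2⟩ := Set.not_subset.mp (h n)
    exact ⟨z, hz1, hz2⟩
  have hcpt : ∀ n, IsCompact (S.U n x ∩ Uoᶜ) :=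
    fun n => (S.U_compact n x).inter_right hU.isClosed_compl
  have hcl : ∀ n, IsClosed (S.U n x ∩ Uoᶜ) :=
    fun n => ((S.U_compact n x).isClosed).inter hU.isClosed_compl
  have hnested : ∀ n, S.U (n + 1) x ∩ Uoᶜ ⊆ S.U n x ∩ Uoᶜ :=
    fun n => Set.inter_subset_inter_left _ (S.U_succ_subset n x)
  obtain ⟨z, hz⟩ := IsCompact.nonempty_iInter_of_sequence_nonempty_isCompact_isClosed
    _ hnested hne (hcpt 0) hcl
  have hz1 : z ∈ ⋂ n, S.U n x := Set.mem_iInter.mpr fun n => (Set.mem_iInter.mp hz n).1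
  rw [S.iInter_U x] at hz1
  exact (Set.mem_iInter.mp hz 0).2 (hz1 ▸ hx)

lemma mem_interior_U (n : ℕ) (x : F) : x ∈ interior (S.U n x) := by
  classical
  set B : Set F := ⋃ α ∈ (S.level n).filter (fun α => x ∉ S.cell α), S.cell α with hB
  have hBcl : IsClosed B :=
    (Set.Finite.isCompact_biUnion (Finset.finite_toSet _) fun α _ => S.cell_compact α).isClosed
  have hxB : x ∉ B := by
    rw [hB]
    intro hx
    simp only [Set.mem_iUnion] at hx
    obtain ⟨α, hα, hxα⟩ := hx
    exact (Finset.mem_filter.mp hα).2 hxα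
  have hsub : Bᶜ ⊆ S.U n x := by
    intro z hz
    obtain ⟨α, hα, hzα⟩ := S.exists_cell n z
    by_cases hxα : x ∈ S.cell α
    · exact (S.mem_U_iff).mpr ⟨α, hα, hxα, hzα⟩
    · exact absurd (Set.mem_biUnion (Finset.mem_coe.mpr (Finset.mem_filter.mpr ⟨hα, hxα⟩)) hzα) hz
  exact interior_maximal hsub hBcl.isOpen_compl hxB

lemma U_eq_cell {n : ℕ} {α : S.A} {z : F} (hα : α ∈ S.level n) (hz : z ∈ S.cell α)
    (huniq : ∀ α' ∈ S.level n, z ∈ S.cell α' → α' = α) : S.U n z = S.cell α := by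
  ext w
  rw [S.mem_U_iff]
  constructor
  · rintro ⟨α', h1, h2, h3⟩
    rwa [huniq α' h1 h2] at h3
  · intro hw
    exact ⟨α, hα, hz, hw⟩

lemma mem_Vstar_of_mem_V {z : F} {α : S.A} (h : z ∈ (S.V α : Set F)) : z ∈ S.Vstar :=
  Set.mem_iUnion.mpr ⟨α, h⟩

end FRCS
/-- The collection `{interior (U_n(x)) : x ∈ F, n ≥ 0}` is a countable fundamental system of
neighborhoods: moreover, for any `x ∈ F` and any open neighborhood `U` of `x` there exist
`y ∈ V_*` and `n` such that `x ∈ U_n(x) ⊆ U_n(y) ⊆ U`. -/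
theorem stmt4 {F : Type} [MetricSpace F] [CompactSpace F] (S : FRCS F) :
    Set.Countable {s : Set F | ∃ x n, s = interior (S.U n x)} ∧
    (∀ x : F, ∀ Uo : Set F, IsOpen Uo → x ∈ Uo →
      ∃ y ∈ S.Vstar, ∃ n, x ∈ S.U n x ∧ S.U n x ⊆ S.U n y ∧ S.U n y ⊆ Uo) ∧
    (∀ x : F, ∀ Uo : Set F, IsOpen Uo → x ∈ Uo →
      ∃ n, interior (S.U n x) ∈ nhds x ∧ interior (S.U n x) ⊆ Uo) := by
  classical
  haveI : Countable S.A := S.countable_A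
  refine ⟨?_, ?_, ?_⟩
  · -- countability
    have hsub : {s : Set F | ∃ x n, s = interior (S.U n x)} ⊆
        Set.range (fun t : Finset S.A => interior (⋃ α ∈ t, S.cell α)) := by
      rintro s ⟨x, n, rfl⟩
      refine ⟨(S.level n).filter (fun α => x ∈ S.cell α), ?_⟩
      show interior _ = _
      rw [← S.U_eq n x]
    exact Set.Countable.mono hsub (Set.countable_range _)
  · -- fundamental system with vertex base points
    intro x Uo hUo hx
    by_cases hxV : x ∈ S.Vstar
    · obtain ⟨n, hn⟩ := S.exists_U_subset hUo hx
      exact ⟨x, hxV, n, S.mem_U_self n x, subset_rfl, hn⟩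
    · obtain ⟨n, hn⟩ := S.exists_U_subset hUo hx
      obtain ⟨α, hα, hxα⟩ := S.exists_cell n x
      have huniq : ∀ α' ∈ S.level n, x ∈ S.cell α' → α' = α := by
        intro α' h1 h2
        by_contra hne
        have h3 := S.inter_cells n α' h1 α hα hne
        have h4 : x ∈ (S.V α' : Set F) ∩ (S.V α : Set F) := h3 ▸ ⟨h2, hxα⟩
        exact hxV (S.mem_Vstar_of_mem_V h4.1)
      have hUx : S.U n x = S.cell α := S.U_eq_cell hα hxα huniq
      have hxVα : x ∉ (S.V α : Set F) := fun h => hxV (S.mem_Vstar_of_mem_V h)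
      have hVαcl : IsOpen ((S.V α : Set F)ᶜ) := (S.V α).finite_toSet.isClosed.isOpen_compl
      obtain ⟨m₀, hm₀⟩ := S.exists_U_subset hVαcl hxVα
      set m : ℕ := max m₀ n with hm
      obtain ⟨β, hβ, hxβ⟩ := S.exists_cell m x
      have hVβne : (S.V β).Nonempty := Finset.card_pos.mp (lt_of_lt_of_le two_pos (S.two_le_card_V β))
      obtain ⟨p, hp⟩ := hVβne
      have hpβ : p ∈ S.cell β := S.V_subset_cell β hp
      have hpU : p ∈ S.U m x := (S.mem_U_iff).mpr ⟨β, hβ, hxβ, hpβ⟩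
      have hpα : p ∈ S.cell α := hUx ▸ S.U_antitone (le_max_right m₀ n) x hpU
      have hpVα : p ∉ (S.V α : Set F) := hm₀ (S.U_antitone (le_max_left m₀ n) x hpU)
      have huniqp : ∀ α' ∈ S.level n, p ∈ S.cell α' → α' = α := by
        intro α' h1 h2
        by_contra hne
        have h3 := S.inter_cells n α' h1 α hα hne
        have h4 : p ∈ (S.V α' : Set F) ∩ (S.V α : Set F) := h3 ▸ ⟨h2, hpα⟩
        exact hpVα h4.2
      have hUp : S.U n p = S.cell α := S.U_eq_cell hα hpα huniqp
      refine ⟨p, S.mem_Vstar_of_mem_V (Finset.mem_coe.mpr hp), n, S.mem_U_self n x, ?_, ?_⟩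
      · rw [hUx, hUp]
      · rw [hUp, ← hUx]; exact hn
  · -- interiors form a neighborhood basis
    intro x Uo hUo hx
    obtain ⟨n, hn⟩ := S.exists_U_subset hUo hx
    exact ⟨n, isOpen_interior.mem_nhds (S.mem_interior_U n x),
      interior_subset.trans hn⟩
end

section
/- The effective resistance R(p,q) defined from a resistance form (E, Dom E) on a countable set V_* is a metric on V_*. -/
/-!
For `p ≠ q`, completeness of `(Dom 𝓔, 𝓔)` yields a function `h` of least energy among those
with `h p - h q = 1`, and by the Markov property it may be taken with values in `[0, 1]`.
Minimality gives `𝓔(h, f) = 𝓔(h, h) (f p - f q)`, and `1 = (h p - h q)² ≤ R(p,q) 𝓔(h, h)`.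
For the triangle inequality, `g = h_pq / 𝓔(h_pq, h_pq) + h_qr / 𝓔(h_qr, h_qr)` satisfies
`𝓔(g, f) = f p - f r` and `𝓔(g, g) = g p - g r ≤ R(p,q) + R(q,r)`, so Cauchy–Schwarz bounds
`(f p - f r)²` by `(R(p,q) + R(q,r)) 𝓔(f, f)`.
-/

open Filter Topology

namespace ResistanceForm

variable {V : Type} (rf : ResistanceForm V) {u v : V → ℝ} {p q : V}

lemma energy_add_left (u v w : V → ℝ) :
    rf.Energy (u + v) w = rf.Energy u w + rf.Energy v w := by
  simpa using rf.add_smul_left u v w 1 1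

lemma energy_smul_left (a : ℝ) (u w : V → ℝ) :
    rf.Energy (a • u) w = a * rf.Energy u w := by
  simpa using rf.add_smul_left u u w a 0

lemma energy_add_right (u v w : V → ℝ) :
    rf.Energy w (u + v) = rf.Energy w u + rf.Energy w v := by
  rw [rf.symm, energy_add_left, rf.symm u, rf.symm v]

lemma energy_smul_right (a : ℝ) (u w : V → ℝ) :
    rf.Energy w (a • u) = a * rf.Energy w u := by
  rw [rf.symm, energy_smul_left, rf.symm u]

lemma energy_add_self (u v : V → ℝ) :
    rf.Energy (u + v) (u + v) = rf.Energy u u + 2 * rf.Energy u v + rf.Energy v v := by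
  rw [energy_add_left, energy_add_right, energy_add_right, rf.symm v u]
  ring

lemma energy_sub_self (u v : V → ℝ) :
    rf.Energy (u - v) (u - v) = rf.Energy u u - 2 * rf.Energy u v + rf.Energy v v := by
  rw [sub_eq_add_neg, ← neg_one_smul ℝ v, energy_add_self, energy_smul_right, energy_smul_left,
    energy_smul_right]
  ring

lemma energy_sub_self_comm (u v : V → ℝ) :
    rf.Energy (u - v) (u - v) = rf.Energy (v - u) (v - u) := by
  rw [energy_sub_self, energy_sub_self, rf.symm u v]
  ring

lemma add_mem_dom (hu : u ∈ rf.dom) (hv : v ∈ rf.dom) : u + v ∈ rf.dom := by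
  simpa using rf.dom_add_smul u hu v hv 1 1

lemma sub_mem_dom (hu : u ∈ rf.dom) (hv : v ∈ rf.dom) : u - v ∈ rf.dom := by
  simpa [sub_eq_add_neg] using rf.dom_add_smul u hu v hv 1 (-1)

lemma smul_mem_dom (a : ℝ) (hu : u ∈ rf.dom) : a • u ∈ rf.dom := by
  simpa using rf.dom_add_smul u hu u hu a 0

lemma energy_sq_le (hu : u ∈ rf.dom) (hv : v ∈ rf.dom) :
    rf.Energy u v ^ 2 ≤ rf.Energy u u * rf.Energy v v := by
  have hquad : ∀ t : ℝ,
      0 ≤ rf.Energy v v * (t * t) + 2 * rf.Energy u v * t + rf.Energy u u := by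
    intro t
    have h := rf.nonneg _ (rf.add_mem_dom hu (rf.smul_mem_dom t hv))
    rw [energy_add_self, energy_smul_right, energy_smul_left, energy_smul_right] at h
    linarith
  have h := discrim_le_zero hquad
  rw [discrim] at h
  linarith

lemma sqrt_energy_add_le (hu : u ∈ rf.dom) (hv : v ∈ rf.dom) :
    √(rf.Energy (u + v) (u + v)) ≤ √(rf.Energy u u) + √(rf.Energy v v) := by
  have hcs : |rf.Energy u v| ≤ √(rf.Energy u u) * √(rf.Energy v v) := by
    rw [← Real.sqrt_mul (rf.nonneg u hu)]
    exact Real.abs_le_sqrt (rf.energy_sq_le hu hv)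
  rw [Real.sqrt_le_left (by positivity), add_sq, Real.sq_sqrt (rf.nonneg u hu),
    Real.sq_sqrt (rf.nonneg v hv), energy_add_self]
  linarith [le_abs_self (rf.Energy u v)]

lemma abs_sqrt_energy_sub_le (hu : u ∈ rf.dom) (hv : v ∈ rf.dom) :
    |√(rf.Energy u u) - √(rf.Energy v v)| ≤ √(rf.Energy (u - v) (u - v)) := by
  rw [abs_sub_le_iff, sub_le_iff_le_add', sub_le_iff_le_add']
  constructor
  · simpa using rf.sqrt_energy_add_le hv (rf.sub_mem_dom hu hv)
  · rw [energy_sub_self_comm]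
    simpa using rf.sqrt_energy_add_le hu (rf.sub_mem_dom hv hu)

lemma tendsto_energy_of_tendsto_energy_sub {u : ℕ → V → ℝ} (hu : ∀ n, u n ∈ rf.dom)
    (hv : v ∈ rf.dom) (h : Tendsto (fun n => rf.Energy (u n - v) (u n - v)) atTop (𝓝 0)) :
    Tendsto (fun n => rf.Energy (u n) (u n)) atTop (𝓝 (rf.Energy v v)) := by
  have hsqrt : Tendsto (fun n => √(rf.Energy (u n) (u n))) atTop (𝓝 √(rf.Energy v v)) := by
    refine tendsto_iff_dist_tendsto_zero.2 <|
      squeeze_zero (fun _ => dist_nonneg) (fun n => ?_) (by simpa using h.sqrt)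
    exact rf.abs_sqrt_energy_sub_le (hu n) hv
  convert hsqrt.pow 2 using 1
  · funext n
    exact (Real.sq_sqrt (rf.nonneg _ (hu n))).symm
  · rw [Real.sq_sqrt (rf.nonneg v hv)]

lemma energy_const_self (c : ℝ) : rf.Energy (fun _ => c) (fun _ => c) = 0 :=
  (rf.energy_zero_iff _ (rf.const_mem c)).2 ⟨c, rfl⟩

lemma energy_const_right (hu : u ∈ rf.dom) (c : ℝ) : rf.Energy u (fun _ => c) = 0 := by
  have h := rf.energy_sq_le hu (rf.const_mem c)
  rw [energy_const_self, mul_zero] at h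
  exact pow_eq_zero_iff two_ne_zero |>.1 (le_antisymm h (sq_nonneg _))

lemma energy_sub_const (hu : u ∈ rf.dom) (c : ℝ) :
    rf.Energy (u - fun _ => c) (u - fun _ => c) = rf.Energy u u := by
  rw [energy_sub_self, energy_const_right rf hu, energy_const_self]
  ring

lemma energy_pos (hu : u ∈ rf.dom) (hpq : u p ≠ u q) : 0 < rf.Energy u u := by
  refine (rf.nonneg u hu).lt_of_ne fun h => hpq ?_
  obtain ⟨c, rfl⟩ := (rf.energy_zero_iff u hu).1 h.symm
  rfl

lemma exists_mem_dom_eq_one_eq_zero (hpq : p ≠ q) : ∃ u ∈ rf.dom, u p = 1 ∧ u q = 0 := by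
  classical
  obtain ⟨u, hu, hval⟩ := rf.exists_extension {p, q} fun x => if x = p then 1 else 0
  exact ⟨u, hu, by simpa using hval p (by simp), by simpa [hpq.symm] using hval q (by simp)⟩

lemma sq_sub_le_R_mul_energy (hu : u ∈ rf.dom) (p q : V) :
    (u p - u q) ^ 2 ≤ rf.R p q * rf.Energy u u := by
  rcases (rf.nonneg u hu).eq_or_lt with h | h
  · obtain ⟨c, rfl⟩ := (rf.energy_zero_iff u hu).1 h.symm
    simp [← h]
  · rw [← div_le_iff₀ h]
    exact le_csSup (rf.bddAbove p q) ⟨u, hu, h, rfl⟩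

lemma tendsto_sub_of_tendsto_energy_sub {u : ℕ → V → ℝ} (hu : ∀ n, u n ∈ rf.dom)
    (hv : v ∈ rf.dom) (h : Tendsto (fun n => rf.Energy (u n - v) (u n - v)) atTop (𝓝 0))
    (p q : V) : Tendsto (fun n => u n p - u n q) atTop (𝓝 (v p - v q)) := by
  refine tendsto_iff_dist_tendsto_zero.2 <|
    squeeze_zero (fun _ => dist_nonneg) (fun n => ?_)
      (by simpa using (h.const_mul (rf.R p q)).sqrt)
  rw [Real.dist_eq]
  refine Real.abs_le_sqrt ?_
  have hsq := rf.sq_sub_le_R_mul_energy (rf.sub_mem_dom (hu n) hv) p q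
  simp only [Pi.sub_apply] at hsq
  linarith

lemma R_le_of_forall_sq_sub_le {C : ℝ} (hC : 0 ≤ C)
    (h : ∀ u ∈ rf.dom, (u p - u q) ^ 2 ≤ C * rf.Energy u u) : rf.R p q ≤ C := by
  refine Real.sSup_le ?_ hC
  rintro _ ⟨u, hu, hpos, rfl⟩
  rw [div_le_iff₀ hpos]
  exact h u hu

lemma R_nonneg (p q : V) : 0 ≤ rf.R p q :=
  Real.sSup_nonneg fun _ ⟨_, _, hpos, hr⟩ => hr ▸ div_nonneg (sq_nonneg _) hpos.le

lemma R_comm (p q : V) : rf.R p q = rf.R q p := by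
  have hle : ∀ p q : V, rf.R p q ≤ rf.R q p := fun p q =>
    rf.R_le_of_forall_sq_sub_le (rf.R_nonneg q p) fun u hu => by
      rw [sub_sq_comm]
      exact rf.sq_sub_le_R_mul_energy hu q p
  exact le_antisymm (hle p q) (hle q p)

lemma R_self (p : V) : rf.R p p = 0 :=
  le_antisymm (rf.R_le_of_forall_sq_sub_le le_rfl fun _ _ => by simp) (rf.R_nonneg p p)

lemma R_eq_zero_iff : rf.R p q = 0 ↔ p = q := by
  refine ⟨fun hR => by_contra fun hpq => ?_, fun hpq => hpq ▸ rf.R_self p⟩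
  obtain ⟨u, hu, hp, hq⟩ := rf.exists_mem_dom_eq_one_eq_zero hpq
  have h := rf.sq_sub_le_R_mul_energy hu p q
  rw [hp, hq, hR] at h
  norm_num at h

-- The constraint is `h p - h q = 1` rather than `h p = 1 ∧ h q = 0`: a limit in energy is only
-- determined up to an additive constant.
structure IsEquilibriumPotential (p q : V) (h : V → ℝ) : Prop where
  mem_dom : h ∈ rf.dom
  sub_eq_one : h p - h q = 1
  energy_le : ∀ f ∈ rf.dom, f p - f q = 1 → rf.Energy h h ≤ rf.Energy f f

namespace IsEquilibriumPotential

variable {rf} {h : V → ℝ} (hh : rf.IsEquilibriumPotential p q h)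
include hh

lemma energy_pos : 0 < rf.Energy h h :=
  rf.energy_pos (p := p) (q := q) hh.mem_dom fun he => by simpa [he] using hh.sub_eq_one

lemma inv_energy_le_R : (rf.Energy h h)⁻¹ ≤ rf.R p q := by
  rw [inv_le_iff_one_le_mul₀ hh.energy_pos]
  simpa [hh.sub_eq_one] using rf.sq_sub_le_R_mul_energy hh.mem_dom p q

lemma energy_eq_zero_of_eq {g : V → ℝ} (hg : g ∈ rf.dom) (hgpq : g p = g q) :
    rf.Energy h g = 0 := by
  have hquad : ∀ t : ℝ, 0 ≤ rf.Energy g g * (t * t) + 2 * rf.Energy h g * t + 0 := by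
    intro t
    have hmin := hh.energy_le _ (rf.add_mem_dom hh.mem_dom (rf.smul_mem_dom t hg))
      (by simp [← hh.sub_eq_one, hgpq])
    rw [energy_add_self, energy_smul_right, energy_smul_left, energy_smul_right] at hmin
    linarith
  have hdisc := discrim_le_zero hquad
  rw [discrim] at hdisc
  nlinarith [sq_nonneg (rf.Energy h g)]

lemma energy_eq (f : V → ℝ) (hf : f ∈ rf.dom) :
    rf.Energy h f = rf.Energy h h * (f p - f q) := by
  have hgpq : (f - (f p - f q) • h) p = (f - (f p - f q) • h) q := by
    simp only [Pi.sub_apply, Pi.smul_apply, smul_eq_mul]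
    linear_combination -(f p - f q) * hh.sub_eq_one
  have hg := hh.energy_eq_zero_of_eq (rf.sub_mem_dom hf (rf.smul_mem_dom _ hh.mem_dom)) hgpq
  rw [sub_eq_add_neg, ← neg_smul, energy_add_right, energy_smul_right] at hg
  linarith

end IsEquilibriumPotential

lemma energy_sub_le_of_le_energy {m : ℝ}
    (hm : ∀ f ∈ rf.dom, f p - f q = 1 → m ≤ rf.Energy f f)
    (hu : u ∈ rf.dom) (hu1 : u p - u q = 1) (hv : v ∈ rf.dom) (hv1 : v p - v q = 1) :
    rf.Energy (u - v) (u - v) ≤ 2 * (rf.Energy u u - m) + 2 * (rf.Energy v v - m) := by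
  have hmid1 : ((1 / 2 : ℝ) • (u + v)) p - ((1 / 2 : ℝ) • (u + v)) q = 1 := by
    simp only [Pi.smul_apply, Pi.add_apply, smul_eq_mul]
    linear_combination (hu1 + hv1) / 2
  have hmid := hm _ (rf.smul_mem_dom _ (rf.add_mem_dom hu hv)) hmid1
  rw [energy_smul_left, energy_smul_right, energy_add_self] at hmid
  linarith [rf.energy_sub_self u v]

lemma exists_isEquilibriumPotential (hpq : p ≠ q) : ∃ h, rf.IsEquilibriumPotential p q h := by
  set S : Set ℝ := (fun f => rf.Energy f f) '' {f | f ∈ rf.dom ∧ f p - f q = 1}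
  have hS : BddBelow S := ⟨0, by rintro _ ⟨g, hg, rfl⟩; exact rf.nonneg g hg.1⟩
  have hm : ∀ f ∈ rf.dom, f p - f q = 1 → sInf S ≤ rf.Energy f f := fun f hf hf1 =>
    csInf_le hS ⟨f, ⟨hf, hf1⟩, rfl⟩
  obtain ⟨f₀, hf₀, hp, hq⟩ := rf.exists_mem_dom_eq_one_eq_zero hpq
  obtain ⟨e, -, he, heS⟩ :=
    exists_seq_tendsto_sInf (S := S) ⟨_, f₀, ⟨hf₀, by simp [hp, hq]⟩, rfl⟩ hS
  choose u hu hue using heS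
  have hcauchy : ∀ ε > 0, ∃ N, ∀ j ≥ N, ∀ k ≥ N, rf.Energy (u j - u k) (u j - u k) < ε := by
    intro ε hε
    obtain ⟨N, hN⟩ := Metric.tendsto_atTop.1 he (ε / 4) (by positivity)
    refine ⟨N, fun j hj k hk => ?_⟩
    have hj' := hN j hj
    have hk' := hN k hk
    rw [Real.dist_eq, ← hue j, abs_lt] at hj'
    rw [Real.dist_eq, ← hue k, abs_lt] at hk'
    linarith [rf.energy_sub_le_of_le_energy hm (hu j).1 (hu j).2 (hu k).1 (hu k).2]
  obtain ⟨v, hv, hconv⟩ := rf.complete u (fun n => (hu n).1) hcauchy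
  have hv1 : v p - v q = 1 := tendsto_nhds_unique
    (rf.tendsto_sub_of_tendsto_energy_sub (fun n => (hu n).1) hv hconv p q)
    (by simpa only [(hu _).2] using tendsto_const_nhds)
  have hEv : rf.Energy v v = sInf S := tendsto_nhds_unique
    (rf.tendsto_energy_of_tendsto_energy_sub (fun n => (hu n).1) hv hconv)
    (by simpa only [hue] using he)
  exact ⟨v, hv, hv1, fun f hf hf1 => hEv ▸ hm f hf hf1⟩

lemma exists_isEquilibriumPotential_mem_Icc (hpq : p ≠ q) :
    ∃ h, rf.IsEquilibriumPotential p q h ∧ ∀ x, h x ∈ Set.Icc 0 1 := by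
  obtain ⟨h, hh⟩ := rf.exists_isEquilibriumPotential hpq
  set w := h - fun _ => h q
  have hw : w ∈ rf.dom := rf.sub_mem_dom hh.mem_dom (rf.const_mem _)
  have hwp : w p = 1 := by simp [w, hh.sub_eq_one]
  have hwq : w q = 0 := by simp [w]
  obtain ⟨htrunc, htrunc_le⟩ := rf.markov w hw
  refine ⟨_, ⟨htrunc, by simp [hwp, hwq], fun f hf hf1 => ?_⟩,
    fun x => ⟨by positivity, min_le_left _ _⟩⟩
  calc _ ≤ rf.Energy w w := htrunc_le
    _ = rf.Energy h h := rf.energy_sub_const hh.mem_dom _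
    _ ≤ rf.Energy f f := hh.energy_le f hf hf1

lemma R_triangle (p q r : V) : rf.R p r ≤ rf.R p q + rf.R q r := by
  rcases eq_or_ne p q with rfl | hpq
  · simp [R_self]
  rcases eq_or_ne q r with rfl | hqr
  · simp [R_self]
  obtain ⟨h₁, hh₁, hI₁⟩ := rf.exists_isEquilibriumPotential_mem_Icc hpq
  obtain ⟨h₂, hh₂, hI₂⟩ := rf.exists_isEquilibriumPotential_mem_Icc hqr
  set g := (rf.Energy h₁ h₁)⁻¹ • h₁ + (rf.Energy h₂ h₂)⁻¹ • h₂
  have hg : g ∈ rf.dom := rf.dom_add_smul _ hh₁.mem_dom _ hh₂.mem_dom _ _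
  have hgf : ∀ f ∈ rf.dom, rf.Energy g f = f p - f r := by
    intro f hf
    rw [rf.add_smul_left, hh₁.energy_eq f hf, hh₂.energy_eq f hf,
      inv_mul_cancel_left₀ hh₁.energy_pos.ne', inv_mul_cancel_left₀ hh₂.energy_pos.ne']
    ring
  have hgg : rf.Energy g g ≤ rf.R p q + rf.R q r := calc
    rf.Energy g g
        = (rf.Energy h₁ h₁)⁻¹ * (h₁ p - h₁ r) + (rf.Energy h₂ h₂)⁻¹ * (h₂ p - h₂ r) := by
      rw [hgf g hg]
      simp only [g, Pi.add_apply, Pi.smul_apply, smul_eq_mul]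
      ring
    _ ≤ (rf.Energy h₁ h₁)⁻¹ * 1 + (rf.Energy h₂ h₂)⁻¹ * 1 := by
      have := hh₁.energy_pos
      have := hh₂.energy_pos
      gcongr <;> linarith [(hI₁ p).2, (hI₁ r).1, (hI₂ p).2, (hI₂ r).1]
    _ ≤ rf.R p q + rf.R q r := by
      simpa using add_le_add hh₁.inv_energy_le_R hh₂.inv_energy_le_R
  refine rf.R_le_of_forall_sq_sub_le (add_nonneg (rf.R_nonneg p q) (rf.R_nonneg q r)) ?_
  intro f hf
  calc (f p - f r) ^ 2 = rf.Energy g f ^ 2 := by rw [hgf f hf]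
    _ ≤ rf.Energy g g * rf.Energy f f := rf.energy_sq_le hg hf
    _ ≤ (rf.R p q + rf.R q r) * rf.Energy f f := by gcongr; exact rf.nonneg f hf

end ResistanceForm

theorem stmt5_general {V : Type} (rf : ResistanceForm V) :
    (∀ p q : V, 0 ≤ rf.R p q) ∧
    (∀ p q : V, rf.R p q = rf.R q p) ∧
    (∀ p q : V, rf.R p q = 0 ↔ p = q) ∧
    (∀ p q r : V, rf.R p r ≤ rf.R p q + rf.R q r) :=
  ⟨rf.R_nonneg, rf.R_comm, fun _ _ => rf.R_eq_zero_iff, rf.R_triangle⟩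

/-- The effective resistance `R` associated with a resistance form on a countable set `V_*`
is a metric: it is nonnegative, symmetric, vanishes exactly on the diagonal, and satisfies
the triangle inequality. -/
theorem stmt5 {V : Type} [Countable V] (rf : ResistanceForm V) :
    (∀ p q : V, 0 ≤ rf.R p q) ∧
    (∀ p q : V, rf.R p q = rf.R q p) ∧
    (∀ p q : V, rf.R p q = 0 ↔ p = q) ∧
    (∀ p q r : V, rf.R p r ≤ rf.R p q + rf.R q r) :=
  stmt5_general rf
end

section
/- The harmonic coordinate map ψ : F → ψ(F) is a homeomorphism if and only if ψ restricted to each vertex set V_α is injective and ψ(F_α ∩ F_{α'}) = ψ(F_α) ∩ ψ(F_{α'}) for all cells F_α, F_{α'}. -/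
open Filter Topology

/-- A finitely ramified fractal: a finitely ramified cell structure together with a
resistance form on the set `V_*` of vertex points. -/
structure FRF (F : Type) [MetricSpace F] [CompactSpace F] : Type 1 where
  S : FRCS F
  form : ResistanceForm ↥(S.Vstar)

namespace FRF

variable {F : Type} [MetricSpace F] [CompactSpace F]

/-- The vertices of level `n`, `V_n = ⋃_{α ∈ 𝒜_n} V_α`, as a subset of `V_*`. -/
def Vn (M : FRF F) (n : ℕ) : Set ↥(M.S.Vstar) :=
  {v | ∃ α ∈ M.S.level n, (v : F) ∈ M.S.V α}

/-- A function is `n`-harmonic if it minimizes the energy among all functions of the domain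
with the same values on `V_n`. -/
def IsNHarmonic (M : FRF F) (n : ℕ) (f : ↥(M.S.Vstar) → ℝ) : Prop :=
  f ∈ M.form.dom ∧ ∀ g ∈ M.form.dom, (∀ v ∈ M.Vn n, g v = f v) →
    M.form.Energy f f ≤ M.form.Energy g g

/-- A function is harmonic if it minimizes the energy for its boundary values on `V_0`. -/
def IsHarmonic (M : FRF F) (f : ↥(M.S.Vstar) → ℝ) : Prop := M.IsNHarmonic 0 f

/-- A Cauchy sequence with respect to the effective resistance metric. -/
def RCauchy (M : FRF F) (x : ℕ → ↥(M.S.Vstar)) : Prop :=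
  ∀ ε : ℝ, 0 < ε → ∃ N, ∀ m ≥ N, ∀ n ≥ N, M.form.R (x m) (x n) < ε

/-- A function is `n`-piecewise harmonic if on each `n`-cell it coincides with a (globally)
harmonic function. -/
def IsPiecewiseHarmonic (M : FRF F) (n : ℕ) (f : ↥(M.S.Vstar) → ℝ) : Prop :=
  f ∈ M.form.dom ∧ ∀ α ∈ M.S.level n, ∃ h, M.IsHarmonic h ∧
    ∀ v : ↥(M.S.Vstar), (v : F) ∈ M.S.cell α → h v = f v

/-- Assumption (WN): piecewise harmonic functions are dense in `Dom 𝓔` in the energy norm. -/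
def WeaklyNondegenerate (M : FRF F) : Prop :=
  ∀ f ∈ M.form.dom, ∀ ε : ℝ, 0 < ε → ∃ n, ∃ g, M.IsPiecewiseHarmonic n g ∧
    M.form.Energy (f - g) (f - g) < ε

/-- The index type of `ℓ(V₀)`. -/
abbrev B0 (M : FRF F) : Type := {x : F // x ∈ M.S.V M.S.top}

/-- `t ∈ ℓ(V₀)` is the tangent `Tan_α f`: the boundary values of the minimal-energy harmonic
function that coincides with `f` on the cell `F_α`. -/
def IsTangent (M : FRF F) (α : M.S.A) (f : ↥(M.S.Vstar) → ℝ) (t : M.B0 → ℝ) : Prop :=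
  ∃ h, M.IsHarmonic h ∧ (∀ v : ↥(M.S.Vstar), (v : F) ∈ M.S.cell α → h v = f v) ∧
    (∀ (v : ↥(M.S.Vstar)) (hv : (v : F) ∈ M.S.V M.S.top), h v = t ⟨(v : F), hv⟩) ∧
    (∀ h', M.IsHarmonic h' → (∀ v : ↥(M.S.Vstar), (v : F) ∈ M.S.cell α → h' v = f v) →
      M.form.Energy h h ≤ M.form.Energy h' h')

/-- A continuous function on `F` whose restriction to `V_*` is harmonic. -/
def ContHarmonic (M : FRF F) (h : F → ℝ) : Prop :=
  Continuous h ∧ ∃ f, M.IsHarmonic f ∧ ∀ v : ↥(M.S.Vstar), h (v : F) = f v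

end FRF

/-- For every point there is a strictly decreasing chain of cells, one at each level,
all containing the point. -/
theorem FRCS.exists_chain {F : Type} [MetricSpace F] [CompactSpace F] (S : FRCS F) (x : F) :
    ∃ c : ℕ → S.A, (∀ n, c n ∈ S.level n) ∧ (∀ n, x ∈ S.cell (c n)) ∧
      (∀ n, S.cell (c (n + 1)) ⊂ S.cell (c n)) := by
  have step : ∀ n (α : S.A), α ∈ S.level n → x ∈ S.cell α →
      ∃ β, β ∈ S.level (n + 1) ∧ x ∈ S.cell β ∧ S.cell β ⊂ S.cell α := by
    intro n α hα hx
    obtain ⟨s, -, hs, hcov, -⟩ := S.subdiv n α hα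
    have hx' : x ∈ ⋃ β ∈ s, S.cell β := hcov ▸ hx
    simp only [Set.mem_iUnion] at hx'
    obtain ⟨β, hβs, hxβ⟩ := hx'
    have hβl := hs hβs
    have hsub : S.cell β ⊆ S.cell α := by
      rw [hcov]; exact Set.subset_biUnion_of_mem hβs
    refine ⟨β, hβl, hxβ, hsub, fun hle => ?_⟩
    have : β = α := S.cell_injective (le_antisymm hsub hle)
    subst this
    exact Finset.disjoint_left.mp (S.level_disjoint (n + 1) n (by omega)) hβl hα
  choose f hf1 hf2 hf3 using step
  let c : (n : ℕ) → {p : S.A // p ∈ S.level n ∧ x ∈ S.cell p} :=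
    fun n => Nat.rec
      ⟨S.top, by rw [S.level_zero]; exact Finset.mem_singleton_self _,
        by rw [S.cell_top]; trivial⟩
      (fun n p => ⟨f n p.1 p.2.1 p.2.2, hf1 n p.1 p.2.1 p.2.2, hf2 n p.1 p.2.1 p.2.2⟩) n
  exact ⟨fun n => (c n).1, fun n => (c n).2.1, fun n => (c n).2.2,
    fun n => hf3 n (c n).1 (c n).2.1 (c n).2.2⟩

/-- The harmonic coordinate map is injective provided images of intersections of cells
are intersections of images. -/
theorem psi_injective_of_inter {F : Type} [MetricSpace F] [CompactSpace F] (S : FRCS F)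
    {Y : Type} [TopologicalSpace Y] [T2Space Y] (ψ : F → Y)
    (hinter : ∀ n n', ∀ α ∈ S.level n, ∀ α' ∈ S.level n',
      ψ '' (S.cell α ∩ S.cell α') = (ψ '' S.cell α) ∩ (ψ '' S.cell α')) :
    Function.Injective ψ := by
  intro x y hxy
  obtain ⟨cx, hcx1, hcx2, hcx3⟩ := S.exists_chain x
  obtain ⟨cy, hcy1, hcy2, hcy3⟩ := S.exists_chain y
  -- antitonicity of the chains
  have anti : ∀ (c : ℕ → S.A), (∀ n, S.cell (c (n + 1)) ⊂ S.cell (c n)) →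
      ∀ m n, m ≤ n → S.cell (c n) ⊆ S.cell (c m) := by
    intro c hc m n hmn
    induction n, hmn using Nat.le_induction with
    | base => exact le_rfl
    | succ n hmn ih => exact (hc n).1.trans ih
  -- the chains intersect in the points themselves
  have hix : (⋂ n, S.cell (cx n)) = {x} := by
    obtain ⟨x0, hx0⟩ := S.nested_singleton cx hcx3
    have : x ∈ ⋂ n, S.cell (cx n) := Set.mem_iInter.2 hcx2
    rw [hx0] at this ⊢
    rw [Set.mem_singleton_iff.mp this]
  have hiy : (⋂ n, S.cell (cy n)) = {y} := by
    obtain ⟨y0, hy0⟩ := S.nested_singleton cy hcy3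
    have : y ∈ ⋂ n, S.cell (cy n) := Set.mem_iInter.2 hcy2
    rw [hy0] at this ⊢
    rw [Set.mem_singleton_iff.mp this]
  -- pick a point in each intersection of cells whose image is ψ x
  have hz : ∀ n : ℕ, ∃ z, z ∈ S.cell (cx n) ∩ S.cell (cy n) := by
    intro n
    have h1 : ψ x ∈ (ψ '' S.cell (cx n)) ∩ (ψ '' S.cell (cy n)) :=
      ⟨⟨x, hcx2 n, rfl⟩, ⟨y, hcy2 n, hxy.symm⟩⟩
    rw [← hinter n n (cx n) (hcx1 n) (cy n) (hcy1 n)] at h1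
    obtain ⟨z, hz, -⟩ := h1
    exact ⟨z, hz⟩
  choose z hz1 hz2 using fun n => (hz n)
  -- a subsequential limit of `z` lies in all cells of both chains
  obtain ⟨w, -, φ, hφ, hlim⟩ := IsCompact.tendsto_subseq (x := z) isCompact_univ
    (fun n => Set.mem_univ _)
  have hw : ∀ (c : ℕ → S.A), (∀ n, S.cell (c (n + 1)) ⊂ S.cell (c n)) →
      (∀ n, z n ∈ S.cell (c n)) → ∀ m, w ∈ S.cell (c m) := by
    intro c hc hmem m
    refine (S.cell_compact (c m)).isClosed.mem_of_tendsto hlim ?_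
    refine Filter.eventually_atTop.2 ⟨m, fun k hk => ?_⟩
    exact anti c hc m (φ k) (hk.trans (hφ.le_apply)) (hmem (φ k))
  have hwx : w ∈ ⋂ n, S.cell (cx n) := Set.mem_iInter.2 (hw cx hcx3 hz1)
  have hwy : w ∈ ⋂ n, S.cell (cy n) := Set.mem_iInter.2 (hw cy hcy3 hz2)
  rw [hix, Set.mem_singleton_iff] at hwx
  rw [hiy, Set.mem_singleton_iff] at hwy
  rw [← hwx, hwy]

open scoped Classical in
/-- Kigami's harmonic coordinate map `ψ = (h_1, ..., h_m) : F → ℝ^{V₀}` is a homeomorphism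
onto its image if and only if `ψ` restricted to each vertex set `V_α` is injective and
`ψ(F_α ∩ F_{α'}) = ψ(F_α) ∩ ψ(F_{α'})` for all cells `F_α, F_{α'}`. -/
theorem stmt16 {F : Type} [MetricSpace F] [CompactSpace F] (M : FRF F)
    (h : M.B0 → F → ℝ)
    (hch : ∀ v, M.ContHarmonic (h v))
    (hdelta : ∀ v v' : M.B0, h v (v' : F) = if v = v' then 1 else 0) :
    (∃ e : F ≃ₜ (Set.range fun x : F => fun v : M.B0 => h v x),
      ∀ x : F, (e x : M.B0 → ℝ) = fun v => h v x) ↔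
    ((∀ n, ∀ α ∈ M.S.level n,
        Set.InjOn (fun x : F => fun v : M.B0 => h v x) (M.S.V α : Set F)) ∧
      (∀ n n', ∀ α ∈ M.S.level n, ∀ α' ∈ M.S.level n',
        (fun x : F => fun v : M.B0 => h v x) '' (M.S.cell α ∩ M.S.cell α') =
          ((fun x : F => fun v : M.B0 => h v x) '' M.S.cell α) ∩
            ((fun x : F => fun v : M.B0 => h v x) '' M.S.cell α'))) := by
  set ψ : F → (M.B0 → ℝ) := fun x => fun v : M.B0 => h v x with hψ
  have hcont : Continuous ψ := continuous_pi fun v => (hch v).1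
  constructor
  · rintro ⟨e, he⟩
    have hinj : Function.Injective ψ := by
      intro a b hab
      have : e a = e b := Subtype.coe_injective (by show (e a : M.B0 → ℝ) = e b; rw [he a, he b]; exact hab)
      exact e.injective this
    exact ⟨fun n α _ => hinj.injOn, fun n n' α _ α' _ => Set.image_inter hinj⟩
  · rintro ⟨-, hinter⟩
    have hinj : Function.Injective ψ :=
      psi_injective_of_inter M.S ψ hinter
    have hc : Continuous fun x => (⟨ψ x, Set.mem_range_self x⟩ : Set.range ψ) :=
      hcont.subtype_mk _
    exact ⟨Continuous.homeoOfEquivCompactToT2 (f := Equiv.ofInjective ψ hinj) hc,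
      fun x => rfl⟩
end

section
/- Under the harmonic coordinate assumption (ψ : F → F_H ⊂ ℝ^m is a homeomorphism, F identified with F_H), if f is the restriction to F of a C¹(ℝ^m) function, then E_n(f,f) ≤ ν(F)·‖f‖²_{C¹(ℝ^m)} for every n, and the same bound holds for E(f,f); in particular f ∈ Dom E. -/
open Filter Topology

/-- Under the harmonic coordinate assumption (`F` realized inside `ℝ^m` in harmonic
coordinates), if `f` is the restriction to `F` of a `C¹(ℝ^m)` function with
`‖f‖_{C¹} ≤ L`, then `𝓔_n(f,f) = Σ_{x,y ∈ V_n} c_{n,x,y} (f(x) - f(y))² ≤ ν(F) · L²`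
for every `n` (using `Σ_{x,y ∈ V_n} c_{n,x,y} |x-y|² = ν(F)`), the same bound holds for the
nondecreasing limit `𝓔(f,f) = lim_n 𝓔_n(f,f)`, and in particular the limit exists, i.e.
`f ∈ Dom 𝓔`. -/
theorem stmt17 {m : ℕ}
    (Vn : ℕ → Finset (EuclideanSpace ℝ (Fin m)))
    (c : ℕ → EuclideanSpace ℝ (Fin m) → EuclideanSpace ℝ (Fin m) → ℝ)
    (hc : ∀ n x y, 0 ≤ c n x y)
    (νF : ℝ)
    (hν : ∀ n, ∑ x ∈ Vn n, ∑ y ∈ Vn n, c n x y * ‖x - y‖ ^ 2 = νF)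
    (f : EuclideanSpace ℝ (Fin m) → ℝ) (L : ℝ)
    (hf : Differentiable ℝ f) (hL : ∀ x, ‖fderiv ℝ f x‖ ≤ L)
    (hmono : Monotone (fun n => ∑ x ∈ Vn n, ∑ y ∈ Vn n, c n x y * (f x - f y) ^ 2)) :
    (∀ n, ∑ x ∈ Vn n, ∑ y ∈ Vn n, c n x y * (f x - f y) ^ 2 ≤ νF * L ^ 2) ∧
    (∃ E : ℝ, E ≤ νF * L ^ 2 ∧
      Tendsto (fun n => ∑ x ∈ Vn n, ∑ y ∈ Vn n, c n x y * (f x - f y) ^ 2)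
        atTop (nhds E)) := by
  have hL0 : 0 ≤ L := le_trans (norm_nonneg _) (hL 0)
  -- Lipschitz estimate from the mean value inequality
  have hlip : ∀ x y : EuclideanSpace ℝ (Fin m), ‖f x - f y‖ ≤ L * ‖x - y‖ := by
    intro x y
    have := Convex.norm_image_sub_le_of_norm_fderiv_le
      (fun z _ => hf z)
      (fun z _ => by simpa [fderivWithin_univ] using hL z)
      (convex_univ) (Set.mem_univ y) (Set.mem_univ x)
    simpa [fderivWithin_univ] using this
  have key : ∀ n, ∑ x ∈ Vn n, ∑ y ∈ Vn n, c n x y * (f x - f y) ^ 2 ≤ νF * L ^ 2 := by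
    intro n
    calc ∑ x ∈ Vn n, ∑ y ∈ Vn n, c n x y * (f x - f y) ^ 2
        ≤ ∑ x ∈ Vn n, ∑ y ∈ Vn n, c n x y * (L ^ 2 * ‖x - y‖ ^ 2) := by
          refine Finset.sum_le_sum fun x _ => Finset.sum_le_sum fun y _ => ?_
          refine mul_le_mul_of_nonneg_left ?_ (hc n x y)
          have h1 : |f x - f y| ≤ L * ‖x - y‖ := by simpa using hlip x y
          calc (f x - f y) ^ 2 = |f x - f y| ^ 2 := (sq_abs _).symm
            _ ≤ (L * ‖x - y‖) ^ 2 := by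
                exact pow_le_pow_left₀ (abs_nonneg _) h1 2
            _ = L ^ 2 * ‖x - y‖ ^ 2 := by ring
      _ = L ^ 2 * ∑ x ∈ Vn n, ∑ y ∈ Vn n, c n x y * ‖x - y‖ ^ 2 := by
          rw [Finset.mul_sum]
          refine Finset.sum_congr rfl fun x _ => ?_
          rw [Finset.mul_sum]
          exact Finset.sum_congr rfl fun y _ => by ring
      _ = νF * L ^ 2 := by rw [hν n]; ring
  refine ⟨key, ?_⟩
  obtain ⟨E, hE⟩ := tendsto_of_monotone hmono |>.resolve_left
    (fun h => absurd (h.eventually_gt_atTop (νF * L ^ 2)) (by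
      simp only [not_eventually]
      exact Filter.Eventually.frequently (Filter.Eventually.of_forall
        fun n => not_lt.mpr (key n))))
  refine ⟨E, ?_, hE⟩
  exact le_of_tendsto hE (Filter.Eventually.of_forall key)
end
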